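/- arXiv:1809.02483 — 2 statements merged into one kernel-verified Lean document; each statement's English description precedes it below -/
import Mathlib

section
/- Let K₁ and K₂ be complete discrete valued fields of mixed characteristic (0, p) with perfect residue fields, with Teichmüller representative sets S(K₁) and S(K₂), and let f : H_n(K₁) → H_m(K₂) be a homomorphism of valued hyperfields. Then f maps H_n(S(K₁)) = {[a]_n : a ∈ S(K₁)} into H_m(S(K₂)) = {[a]_m : a ∈ S(K₂)}, and the restriction of f to H_n(S(K₁)) is injective. -/
open Multiplicative WithZero Filter

noncomputable section

/-- The multiplicative value group `ℚₘ₀` used for normalized valuations: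
`expQ q` corresponds to the additive value `q`. -/
abbrev QM0 : Type := WithZero (Multiplicative ℚ)

/-- `expQ q` is the element of `ℚₘ₀` corresponding to the additive value `q`
(so that `v x = expQ q` means `ν(x) = q` additively). -/
def expQ (q : ℚ) : QM0 := ((Multiplicative.ofAdd (-q) : Multiplicative ℚ) : QM0)

section Hyper

variable {K : Type*} [Field K] {Γ₀ : Type*} [LinearOrderedCommGroupWithZero Γ₀]

/-- `hrel v γ a b` says that `b` belongs to the coset `a·(1+𝔪^γ)`,
where `𝔪^γ = {x : ν(x) > γ}` (multiplicatively: `v x < γ`). -/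
def hrel (v : Valuation K Γ₀) (γ : Γ₀) (a b : K) : Prop :=
  ∃ u : K, v (u - 1) < γ ∧ b = a * u

/-- The coset `a·(1+𝔪^γ)` as a subset of `K`. -/
def coset (v : Valuation K Γ₀) (γ : Γ₀) (a : K) : Set K := {b | hrel v γ a b}

/-- `hsumMem v γ a b c` says `[c] ∈ [a] + [b]` in the valued hyperfield `H_γ(K)`. -/
def hsumMem (v : Valuation K Γ₀) (γ : Γ₀) (a b c : K) : Prop :=
  ∃ x y : K, hrel v γ a x ∧ hrel v γ b y ∧ hrel v γ (x + y) c

/-- The valued hyperfield `H_γ(K) = K/(1+𝔪^γ)`. -/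
def Hyp (v : Valuation K Γ₀) (γ : Γ₀) : Type _ := Quot (hrel v γ)

/-- The class `[a]_γ ∈ H_γ(K)`. -/
def hmk (v : Valuation K Γ₀) (γ : Γ₀) (a : K) : Hyp v γ := Quot.mk _ a

end Hyper

section HypHom

variable {K₁ K₂ : Type*} [Field K₁] [Field K₂]
variable {Γ₁ Γ₂ : Type*} [LinearOrderedCommGroupWithZero Γ₁] [LinearOrderedCommGroupWithZero Γ₂]

/-- A homomorphism of valued hyperfields `H_γ(K₁) → H_δ(K₂)`:
`f([0]) = [0]`, `f([1]) = [1]`, `f` is multiplicative, `f(α + β) ⊆ f(α) + f(β)`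
and `ν(α) ≤ ν(β) ↔ ν(f α) ≤ ν(f β)` (stated here multiplicatively). -/
structure HypHom (v₁ : Valuation K₁ Γ₁) (γ : Γ₁) (v₂ : Valuation K₂ Γ₂) (δ : Γ₂) where
  toFun : Hyp v₁ γ → Hyp v₂ δ
  map_zero' : toFun (hmk v₁ γ 0) = hmk v₂ δ 0
  map_one' : toFun (hmk v₁ γ 1) = hmk v₂ δ 1
  map_mul' : ∀ (a b : K₁) (a' b' : K₂), toFun (hmk v₁ γ a) = hmk v₂ δ a' →
    toFun (hmk v₁ γ b) = hmk v₂ δ b' → toFun (hmk v₁ γ (a * b)) = hmk v₂ δ (a' * b')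
  map_hsum' : ∀ (a b c : K₁) (a' b' c' : K₂), toFun (hmk v₁ γ a) = hmk v₂ δ a' →
    toFun (hmk v₁ γ b) = hmk v₂ δ b' → toFun (hmk v₁ γ c) = hmk v₂ δ c' →
    hsumMem v₁ γ a b c → hsumMem v₂ δ a' b' c'
  val_le_iff' : ∀ (a b : K₁) (a' b' : K₂), toFun (hmk v₁ γ a) = hmk v₂ δ a' →
    toFun (hmk v₁ γ b) = hmk v₂ δ b' → (v₁ a ≤ v₁ b ↔ v₂ a' ≤ v₂ b')

/-- A homomorphism of valued hyperfields is *over `p`* if `f([p]) = [p]`. -/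
def HypHom.OverP {v₁ : Valuation K₁ Γ₁} {γ : Γ₁} {v₂ : Valuation K₂ Γ₂} {δ : Γ₂}
    (p : ℕ) (f : HypHom v₁ γ v₂ δ) : Prop :=
  f.toFun (hmk v₁ γ (p : K₁)) = hmk v₂ δ (p : K₂)

end HypHom

section CDVF

variable (K : Type*) [Field K] [Valued K QM0]

/-- `K` is a complete discrete valued field of mixed characteristic `(0,p)` with
perfect residue field and ramification index `e`, with the valuation normalized so
that `ν(p) = 1` and `ν(K^×) = (1/e)ℤ`.  Perfectness of the residue field is expressed
as surjectivity of the Frobenius on residues. -/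
structure IsCompleteDVF (p e : ℕ) : Prop where
  prime : p.Prime
  charZero : CharZero K
  complete : CompleteSpace K
  epos : 0 < e
  v_p : Valued.v (p : K) = expQ 1
  discrete : ∀ x : K, x ≠ 0 → ∃ k : ℤ, Valued.v x = expQ ((k : ℚ) / e)
  exists_unif : ∃ π : K, Valued.v π = expQ (1 / e)
  perfectResidue : ∀ x : K, Valued.v x ≤ 1 → ∃ y : K, Valued.v y ≤ 1 ∧ Valued.v (x - y ^ p) < 1

/-- The cut-off value for the `n`-th valued hyperfield `H_n(K) = K/(1+𝔪^n)`:
`𝔪^n = {x : ν(x) > (n-1)/e}` when the ramification index is `e` and `ν(p) = 1`. -/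
def hnγ (e n : ℕ) : QM0 := expQ (((n : ℚ) - 1) / e)

/-- The set of Teichmüller representatives: elements of the valuation ring which are
`p^s`-th powers in the valuation ring for every `s`. -/
def Teich (p : ℕ) : Set K :=
  {a | Valued.v a ≤ 1 ∧ ∀ s : ℕ, ∃ b : K, Valued.v b ≤ 1 ∧ b ^ p ^ s = a}

/-- The Witt subring of `K`: the set of (convergent) sums `Σ s_k p^k` with all
`s_k` Teichmüller representatives. -/
def WittPart (p : ℕ) : Set K :=
  {x | ∃ s : ℕ → K, (∀ k, s k ∈ Teich K p) ∧
    Tendsto (fun n => ∑ k ∈ Finset.range n, s k * (p : K) ^ k) atTop (nhds x)}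

end CDVF

/-!
For integral `x, y` one has `v (x ^ p - y ^ p - (x - y) ^ p) ≤ v p * v (x - y)`, so the
Frobenius contracts distances `< 1` by the factor `v π` (`π` a uniformizer) and keeps distance
`1` unchanged.
Consequently distinct Teichmüller representatives are at distance `1`, and if the `c s ^ p ^ s`
all lie in one ball of radius `< 1`, then `c (s + 1) ^ p` and `c s` are congruent mod `π`, and
`c s ^ p ^ s` converges to a Teichmüller representative in that ball.

Image: for `a ≠ 0` choose `p ^ s`-th roots `b s` of `a` and representatives `c s` of `f [b s]`;
multiplicativity gives `[c s ^ p ^ s] = f [a]` for all `s`, and the limit represents `f [a]`.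
Injectivity: if `a ≠ a'`, then `[a] ∈ [a'] + [a - a']` with `v (a - a') = v a`; applying `f` and
using `f [a] = f [a']` gives `[b] ∈ [b] + [d]` with `v d = v b`, which is impossible in `H_m`.
-/

open Topology

lemma expQ_eq_exp (q : ℚ) : expQ q = exp (-q) := rfl

lemma expQ_le_expQ {a b : ℚ} : expQ a ≤ expQ b ↔ b ≤ a := by
  rw [expQ_eq_exp, expQ_eq_exp, exp_le_exp, neg_le_neg_iff]

lemma expQ_lt_expQ {a b : ℚ} : expQ a < expQ b ↔ b < a := by
  rw [expQ_eq_exp, expQ_eq_exp, exp_lt_exp, neg_lt_neg_iff]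

lemma expQ_pow (a : ℚ) (k : ℕ) : expQ a ^ k = expQ (k * a) := by
  rw [expQ_eq_exp, expQ_eq_exp, ← exp_nsmul, nsmul_eq_mul, mul_neg]

lemma one_eq_expQ_zero : (1 : QM0) = expQ 0 := by
  simp [expQ_eq_exp]

lemma exists_eq_expQ {γ : QM0} (hγ : γ ≠ 0) : ∃ q : ℚ, γ = expQ q :=
  ⟨-log γ, by rw [expQ_eq_exp, neg_neg, exp_log hγ]⟩

lemma Valuation.map_pow_le_one {R Γ₀ : Type*} [Ring R] [LinearOrderedCommMonoidWithZero Γ₀]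
    {v : Valuation R Γ₀} {x : R} (hx : v x ≤ 1) (n : ℕ) : v (x ^ n) ≤ 1 :=
  v.map_pow x n ▸ pow_le_one' hx n

namespace Valuation

variable {K Γ₀ : Type*} [Field K] [LinearOrderedCommGroupWithZero Γ₀] (v : Valuation K Γ₀)
  {p : ℕ} {x y : K}

lemma map_pow_prime_sub_pow_prime_sub_sub_pow_le (hp : p.Prime) (hx : v x ≤ 1) (hy : v y ≤ 1) :
    v (x ^ p - y ^ p - (x - y) ^ p) ≤ v (p : K) * v (x - y) := by
  have hxy : x - y ∈ v.integer := v.integer.sub_mem hx hy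
  obtain ⟨r, hr⟩ := exists_add_pow_prime_eq hp (⟨x - y, hxy⟩ : v.integer) ⟨y, hy⟩
  have hr' : x ^ p = (x - y) ^ p + y ^ p + p * (x - y) * y * r := by
    simpa using congrArg Subtype.val hr
  have hrv : v r ≤ 1 := r.2
  rw [hr', show (x - y) ^ p + y ^ p + p * (x - y) * y * r - y ^ p - (x - y) ^ p
    = p * (x - y) * (y * r) by ring, v.map_mul, v.map_mul]
  exact mul_le_of_le_one_right' (v.map_mul y r ▸ mul_le_one' hy hrv)

lemma map_pow_prime_sub_pow_prime_le (hp : p.Prime) (hx : v x ≤ 1) (hy : v y ≤ 1) {ϖ : Γ₀}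
    (hϖ : ϖ ≤ 1) (hpϖ : v (p : K) ≤ ϖ) (hxy : v (x - y) ≤ ϖ) :
    v (x ^ p - y ^ p) ≤ ϖ * v (x - y) := by
  have hdiff : v ((x - y) ^ p) ≤ ϖ * v (x - y) := by
    calc v ((x - y) ^ p) = v (x - y) ^ p := v.map_pow _ _
      _ ≤ v (x - y) ^ 2 := pow_le_pow_right_of_le_one' (hxy.trans hϖ) hp.two_le
      _ ≤ ϖ * v (x - y) := by rw [sq]; exact mul_le_mul_left hxy _
  have hrest := (v.map_pow_prime_sub_pow_prime_sub_sub_pow_le hp hx hy).trans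
    (mul_le_mul_left hpϖ _)
  calc v (x ^ p - y ^ p) = v ((x - y) ^ p + (x ^ p - y ^ p - (x - y) ^ p)) := by ring_nf
    _ ≤ ϖ * v (x - y) := v.map_add_le hdiff hrest

lemma map_pow_prime_pow_sub_pow_prime_pow_le (hp : p.Prime) (hx : v x ≤ 1) (hy : v y ≤ 1)
    {ϖ : Γ₀} (hϖ : ϖ ≤ 1) (hpϖ : v (p : K) ≤ ϖ) (hxy : v (x - y) ≤ ϖ) (s : ℕ) :
    v (x ^ p ^ s - y ^ p ^ s) ≤ ϖ ^ s * v (x - y) := by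
  induction s with
  | zero => simp
  | succ s ih =>
    have hsmall : v (x ^ p ^ s - y ^ p ^ s) ≤ ϖ :=
      ih.trans (mul_le_of_le_one_left' (pow_le_one' hϖ _) |>.trans hxy)
    calc v (x ^ p ^ (s + 1) - y ^ p ^ (s + 1))
        = v ((x ^ p ^ s) ^ p - (y ^ p ^ s) ^ p) := by rw [pow_succ, pow_mul, pow_mul]
      _ ≤ ϖ * v (x ^ p ^ s - y ^ p ^ s) :=
        v.map_pow_prime_sub_pow_prime_le hp (map_pow_le_one hx _) (map_pow_le_one hy _) hϖ hpϖ
          hsmall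
      _ ≤ ϖ * (ϖ ^ s * v (x - y)) := mul_le_mul_right ih _
      _ = ϖ ^ (s + 1) * v (x - y) := by rw [← mul_assoc, pow_succ']

lemma map_sub_lt_one_of_map_pow_prime_sub_lt_one (hp : p.Prime) (hx : v x ≤ 1) (hy : v y ≤ 1)
    (hvp : v (p : K) < 1) (h : v (x ^ p - y ^ p) < 1) : v (x - y) < 1 := by
  have hrest : v (x ^ p - y ^ p - (x - y) ^ p) < 1 :=
    (v.map_pow_prime_sub_pow_prime_sub_sub_pow_le hp hx hy).trans_lt
      (mul_lt_one_of_lt_of_le hvp (v.map_sub_le hx hy))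
  have hpow : v ((x - y) ^ p) < 1 := by
    calc v ((x - y) ^ p) = v ((x ^ p - y ^ p) - (x ^ p - y ^ p - (x - y) ^ p)) := by ring_nf
      _ < 1 := v.map_sub_lt h hrest
  rwa [v.map_pow, pow_lt_one_iff hp.ne_zero] at hpow

lemma map_sub_lt_one_of_map_pow_prime_pow_sub_lt_one (hp : p.Prime) (hx : v x ≤ 1)
    (hy : v y ≤ 1) (hvp : v (p : K) < 1) (s : ℕ) (h : v (x ^ p ^ s - y ^ p ^ s) < 1) :
    v (x - y) < 1 := by
  induction s with
  | zero => simpa using h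
  | succ s ih =>
    refine ih (v.map_sub_lt_one_of_map_pow_prime_sub_lt_one hp
      (map_pow_le_one hx _) (map_pow_le_one hy _) hvp ?_)
    rwa [pow_succ, pow_mul, pow_mul] at h

end Valuation

section Hyperfield

variable {K Γ₀ : Type*} [Field K] [LinearOrderedCommGroupWithZero Γ₀] {v : Valuation K Γ₀}
  {γ : Γ₀} {a b : K}

lemma hrel_iff_map_sub_lt (ha : a ≠ 0) : hrel v γ a b ↔ v (b - a) < v a * γ := by
  have hva : 0 < v a := v.pos_iff.mpr ha
  constructor
  · rintro ⟨u, hu, rfl⟩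
    rw [show a * u - a = a * (u - 1) by ring, v.map_mul]
    exact mul_lt_mul_of_pos_left hu hva
  · intro h
    refine ⟨b / a, ?_, by field_simp⟩
    rw [show b / a - 1 = (b - a) / a by field_simp, map_div₀, div_lt_iff₀ hva, mul_comm]
    exact h

lemma map_eq_of_hrel (hγ : γ ≤ 1) (h : hrel v γ a b) : v b = v a := by
  obtain ⟨u, hu, rfl⟩ := h
  have hu1 : v u = 1 := by
    simpa using v.map_eq_of_sub_lt (x := 1) (y := u) (by simpa using hu.trans_le hγ)
  rw [v.map_mul, hu1, mul_one]

lemma hrel_refl (hγ₀ : γ ≠ 0) (a : K) : hrel v γ a a :=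
  ⟨1, by simpa using zero_lt_iff.mpr hγ₀, (mul_one a).symm⟩

lemma hrel_equivalence (hγ₀ : γ ≠ 0) (hγ : γ ≤ 1) : Equivalence (hrel v γ) := by
  refine ⟨hrel_refl hγ₀, ?_, ?_⟩
  · intro a b h
    rcases eq_or_ne a 0 with rfl | ha
    · obtain ⟨u, -, rfl⟩ := h
      rw [zero_mul]
      exact hrel_refl hγ₀ 0
    have hvb := map_eq_of_hrel hγ h
    have hb : b ≠ 0 := v.ne_zero_iff.mp (hvb ▸ v.ne_zero_iff.mpr ha)
    rw [hrel_iff_map_sub_lt ha] at h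
    rwa [hrel_iff_map_sub_lt hb, hvb, v.map_sub_swap]
  · rintro a b c ⟨u, hu, rfl⟩ ⟨w, hw, rfl⟩
    refine ⟨u * w, ?_, by ring⟩
    have hu1 : v u = 1 := by simpa using map_eq_of_hrel (a := 1) hγ ⟨u, hu, (one_mul u).symm⟩
    rw [show u * w - 1 = u * (w - 1) + (u - 1) by ring]
    exact v.map_add_lt (by rwa [v.map_mul, hu1, one_mul]) hu

lemma hmk_eq_hmk_iff (hγ₀ : γ ≠ 0) (hγ : γ ≤ 1) : hmk v γ a = hmk v γ b ↔ hrel v γ a b :=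
  Quot.eq.trans (hrel_equivalence hγ₀ hγ).eqvGen_iff

lemma hmk_surjective : Function.Surjective (hmk v γ) := Quot.exists_rep

lemma map_lt_of_hsumMem_self (hγ₀ : γ ≠ 0) (hγ : γ ≤ 1) (ha : a ≠ 0) (h : hsumMem v γ a b a) :
    v b < v a := by
  obtain ⟨x, y, hx, hy, hxy⟩ := h
  have hequiv := hrel_equivalence (v := v) hγ₀ hγ
  have hvx : v x = v a := map_eq_of_hrel hγ hx
  have hx0 : x ≠ 0 := v.ne_zero_iff.mp (hvx ▸ v.ne_zero_iff.mpr ha)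
  have hclose := (hrel_iff_map_sub_lt hx0).mp (hequiv.trans (hequiv.symm hx) (hequiv.symm hxy))
  rw [add_sub_cancel_left, map_eq_of_hrel hγ hy, hvx] at hclose
  exact hclose.trans_le (mul_le_of_le_one_right' hγ)

end Hyperfield

namespace HypHom

variable {K₁ K₂ Γ₁ Γ₂ : Type*} [Field K₁] [Field K₂] [LinearOrderedCommGroupWithZero Γ₁]
  [LinearOrderedCommGroupWithZero Γ₂] {v₁ : Valuation K₁ Γ₁} {γ : Γ₁} {v₂ : Valuation K₂ Γ₂}
  {δ : Γ₂} (f : HypHom v₁ γ v₂ δ) {a b : K₁} {a' b' : K₂}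

lemma map_pow (ha : f.toFun (hmk v₁ γ a) = hmk v₂ δ a') (k : ℕ) :
    f.toFun (hmk v₁ γ (a ^ k)) = hmk v₂ δ (a' ^ k) := by
  induction k with
  | zero => simpa using f.map_one'
  | succ k ih => simpa only [pow_succ] using f.map_mul' _ _ _ _ ih ha

lemma map_eq_iff (ha : f.toFun (hmk v₁ γ a) = hmk v₂ δ a')
    (hb : f.toFun (hmk v₁ γ b) = hmk v₂ δ b') : v₁ a = v₁ b ↔ v₂ a' = v₂ b' := by
  rw [le_antisymm_iff, le_antisymm_iff, f.val_le_iff' a b a' b' ha hb,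
    f.val_le_iff' b a b' a' hb ha]

lemma map_le_one_iff (ha : f.toFun (hmk v₁ γ a) = hmk v₂ δ a') : v₁ a ≤ 1 ↔ v₂ a' ≤ 1 := by
  simpa using f.val_le_iff' a 1 a' 1 ha f.map_one'

lemma map_eq_one_iff (ha : f.toFun (hmk v₁ γ a) = hmk v₂ δ a') : v₁ a = 1 ↔ v₂ a' = 1 := by
  simpa using f.map_eq_iff ha f.map_one'

lemma eq_zero_of_map_eq_zero (ha : f.toFun (hmk v₁ γ a) = hmk v₂ δ 0) : a = 0 := by
  simpa using f.map_eq_iff ha f.map_zero'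

end HypHom

namespace Valued

variable {R Γ₀ : Type*} [Ring R] [LinearOrderedCommGroupWithZero Γ₀] [Valued R Γ₀]

lemma setOf_map_sub_lt_mem_nhds (x : R) {z : R} (hz : v z ≠ 0) :
    {y | v (y - x) < v z} ∈ 𝓝 x :=
  mem_nhds.mpr ⟨Units.mk0 (v.restrict z) (by simpa using hz), fun _ hy => v.restrict_lt_iff.mp hy⟩

lemma cauchySeq_of_forall_map_sub_lt {x : ℕ → R}
    (h : ∀ γ : Γ₀, γ ≠ 0 → ∃ N, ∀ a ≥ N, ∀ b ≥ N, v (x b - x a) < γ) : CauchySeq x := by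
  refine (hasBasis_uniformity R Γ₀).cauchySeq_iff.mpr fun γ _ => ?_
  obtain ⟨N, hN⟩ := h _ ((map_ne_zero_iff _ MonoidWithZeroHom.ValueGroup₀.embedding_injective).mpr
    γ.ne_zero)
  exact ⟨N, fun a ha b hb => v.restrict_lt_iff_lt_embedding.mpr (hN a ha b hb)⟩

end Valued

open Valued (v)

lemma expQ_one_div_le_one (e : ℕ) : expQ (1 / e) ≤ 1 := by
  rw [one_eq_expQ_zero, expQ_le_expQ]; positivity

lemma zero_mem_teich {K : Type*} [Field K] [Valued K QM0] {p : ℕ} (hp : p ≠ 0) :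
    (0 : K) ∈ Teich K p :=
  ⟨by simp, fun s => ⟨0, by simp, zero_pow (pow_ne_zero s hp)⟩⟩

namespace IsCompleteDVF

variable {K : Type*} [Field K] [Valued K QM0] {p e : ℕ}

lemma map_le_of_lt_one (hK : IsCompleteDVF K p e) {z : K} (hz : v z < 1) :
    v z ≤ expQ (1 / e) := by
  rcases eq_or_ne z 0 with rfl | hz0
  · simp
  obtain ⟨k, hk⟩ := hK.discrete z hz0
  have he : (0 : ℚ) < e := by exact_mod_cast hK.epos
  rw [hk, one_eq_expQ_zero, expQ_lt_expQ, div_pos_iff_of_pos_right he] at hz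
  rw [hk, expQ_le_expQ]
  gcongr
  exact_mod_cast (show (0 : ℤ) < k by exact_mod_cast hz)

lemma map_p_le (hK : IsCompleteDVF K p e) : v (p : K) ≤ expQ (1 / e) := by
  rw [hK.v_p, expQ_le_expQ]
  exact div_le_one_of_le₀ (by exact_mod_cast hK.epos) (Nat.cast_nonneg e)

lemma map_p_lt_one (hK : IsCompleteDVF K p e) : v (p : K) < 1 := by
  rw [hK.v_p, one_eq_expQ_zero, expQ_lt_expQ]; exact one_pos

lemma exists_pow_lt (hK : IsCompleteDVF K p e) {γ : QM0} (hγ : γ ≠ 0) :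
    ∃ s : ℕ, expQ (1 / e) ^ s < γ := by
  obtain ⟨t, rfl⟩ := exists_eq_expQ hγ
  obtain ⟨s, hs⟩ := exists_nat_gt (t * e)
  have he : (0 : ℚ) < e := by exact_mod_cast hK.epos
  refine ⟨s, ?_⟩
  rw [expQ_pow, expQ_lt_expQ, mul_one_div, lt_div_iff₀ he]
  exact hs

lemma eq_zero_of_forall_map_le_pow (hK : IsCompleteDVF K p e) {z : K}
    (h : ∀ s : ℕ, v z ≤ expQ (1 / e) ^ s) : z = 0 := by
  by_contra hz
  obtain ⟨s, hs⟩ := hK.exists_pow_lt ((v.ne_zero_iff).mpr hz)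
  exact (h s).not_gt hs

lemma setOf_map_sub_lt_mem_nhds (hK : IsCompleteDVF K p e) (x : K) {γ : QM0} (hγ : γ ≠ 0) :
    {y | v (y - x) < γ} ∈ 𝓝 x := by
  obtain ⟨π, hπ⟩ := hK.exists_unif
  obtain ⟨s, hs⟩ := hK.exists_pow_lt hγ
  have hπs : v (π ^ s) = expQ (1 / e) ^ s := by rw [v.map_pow, hπ]
  refine Filter.mem_of_superset (Valued.setOf_map_sub_lt_mem_nhds x (z := π ^ s) ?_) ?_
  · rw [hπs]; exact pow_ne_zero _ WithZero.coe_ne_zero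
  · intro y hy
    exact (hπs ▸ hy : v (y - x) < _).trans hs

lemma cauchySeq_of_map_succ_sub_le (hK : IsCompleteDVF K p e) {x : ℕ → K}
    (h : ∀ s, v (x (s + 1) - x s) ≤ expQ (1 / e) ^ s) : CauchySeq x := by
  have hϖ := expQ_one_div_le_one e
  have hfar : ∀ N, ∀ s ≥ N, v (x s - x N) ≤ expQ (1 / e) ^ N := by
    intro N s hs
    induction s, hs using Nat.le_induction with
    | base => simp
    | succ s hs ih =>
      rw [show x (s + 1) - x N = (x (s + 1) - x s) + (x s - x N) by ring]
      exact v.map_add_le ((h s).trans (pow_le_pow_right_of_le_one' hϖ hs)) ih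
  refine Valued.cauchySeq_of_forall_map_sub_lt fun γ hγ => ?_
  obtain ⟨N, hN⟩ := hK.exists_pow_lt hγ
  refine ⟨N, fun a ha b hb => ?_⟩
  rw [show x b - x a = (x b - x N) - (x a - x N) by ring]
  exact (v.map_sub_le (hfar N b hb) (hfar N a ha)).trans_lt hN

lemma eq_of_teich_of_map_sub_lt_one (hK : IsCompleteDVF K p e) {a a' : K} (ha : a ∈ Teich K p)
    (ha' : a' ∈ Teich K p) (h : v (a - a') < 1) : a = a' := by
  have hϖ := expQ_one_div_le_one e
  rw [← sub_eq_zero]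
  refine hK.eq_zero_of_forall_map_le_pow fun s => ?_
  obtain ⟨b, hb, rfl⟩ := ha.2 s
  obtain ⟨b', hb', rfl⟩ := ha'.2 s
  have hbb' : v (b - b') ≤ expQ (1 / e) := hK.map_le_of_lt_one
    (v.map_sub_lt_one_of_map_pow_prime_pow_sub_lt_one hK.prime hb hb' hK.map_p_lt_one s h)
  calc v (b ^ p ^ s - b' ^ p ^ s) ≤ expQ (1 / e) ^ s * v (b - b') :=
        v.map_pow_prime_pow_sub_pow_prime_pow_le hK.prime hb hb' hϖ hK.map_p_le hbb' s
    _ ≤ expQ (1 / e) ^ s := mul_le_of_le_one_right' (hbb'.trans hϖ)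

lemma map_eq_one_of_teich (hK : IsCompleteDVF K p e) {a : K} (ha : a ∈ Teich K p)
    (h0 : a ≠ 0) : v a = 1 :=
  ha.1.eq_of_not_lt fun hlt => h0 <| hK.eq_of_teich_of_map_sub_lt_one ha
    (zero_mem_teich hK.prime.ne_zero) (by rwa [sub_zero] : v (a - 0) < 1)

lemma cauchySeq_pow_pow (hK : IsCompleteDVF K p e) {c : ℕ → K} (hc : ∀ s, v (c s) ≤ 1)
    (hcoh : ∀ s, v (c (s + 1) ^ p - c s) < 1) : CauchySeq fun s => c s ^ p ^ s := by
  refine hK.cauchySeq_of_map_succ_sub_le fun s => ?_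
  calc v (c (s + 1) ^ p ^ (s + 1) - c s ^ p ^ s)
        = v ((c (s + 1) ^ p) ^ p ^ s - c s ^ p ^ s) := by rw [← pow_mul, ← pow_succ']
    _ ≤ expQ (1 / e) ^ s * v (c (s + 1) ^ p - c s) :=
        v.map_pow_prime_pow_sub_pow_prime_pow_le hK.prime (Valuation.map_pow_le_one (hc _) p)
          (hc s) (expQ_one_div_le_one e) hK.map_p_le (hK.map_le_of_lt_one (hcoh s)) s
    _ ≤ expQ (1 / e) ^ s := mul_le_of_le_one_right' (hcoh s).le

lemma exists_teich_tendsto_pow_pow (hK : IsCompleteDVF K p e) {c : ℕ → K}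
    (hc : ∀ s, v (c s) ≤ 1) (hcoh : ∀ s, v (c (s + 1) ^ p - c s) < 1) :
    ∃ L ∈ Teich K p, Tendsto (fun s => c s ^ p ^ s) atTop (𝓝 L) := by
  have := hK.complete
  have hlim : ∀ t, ∃ L, Tendsto (fun s => c (s + t) ^ p ^ s) atTop (𝓝 L) := fun t =>
    cauchySeq_tendsto_of_complete <| hK.cauchySeq_pow_pow (fun s => hc _)
      (fun s => by simpa only [add_right_comm] using hcoh (s + t))
  choose L hL using hlim
  have hL0 : Tendsto (fun s => c s ^ p ^ s) atTop (𝓝 (L 0)) := by simpa using hL 0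
  have hint : ∀ t, v (L t) ≤ 1 := fun t =>
    (Valued.isClosed_integer K).mem_of_tendsto (hL t)
      (Eventually.of_forall fun s => Valuation.map_pow_le_one (hc _) _)
  refine ⟨L 0, ⟨hint 0, fun t => ⟨L t, hint t, ?_⟩⟩, hL0⟩
  -- the `p ^ t`-th powers of the `t`-shifted sequence are a tail of the original one
  refine tendsto_nhds_unique ((hL t).pow (p ^ t)) ?_
  simpa only [Function.comp_def, ← pow_mul, ← pow_add] using hL0.comp (tendsto_add_atTop_nat t)

lemma exists_teich_map_sub_lt (hK : IsCompleteDVF K p e) {c : ℕ → K} (hc : ∀ s, v (c s) ≤ 1)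
    {a : K} {δ : QM0} (hδ : δ ≤ 1) (hclose : ∀ s, v (c s ^ p ^ s - a) < δ) :
    ∃ L ∈ Teich K p, v (L - a) < δ := by
  have hcoh : ∀ s, v (c (s + 1) ^ p - c s) < 1 := fun s => by
    refine v.map_sub_lt_one_of_map_pow_prime_pow_sub_lt_one hK.prime
      (Valuation.map_pow_le_one (hc _) p) (hc s) hK.map_p_lt_one s ?_
    rw [← pow_mul, ← pow_succ', show c (s + 1) ^ p ^ (s + 1) - c s ^ p ^ s
      = (c (s + 1) ^ p ^ (s + 1) - a) - (c s ^ p ^ s - a) by ring]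
    exact (v.map_sub_lt (hclose _) (hclose s)).trans_le hδ
  obtain ⟨L, hL, hlim⟩ := hK.exists_teich_tendsto_pow_pow hc hcoh
  obtain ⟨s, hs⟩ := (hlim.eventually
    (hK.setOf_map_sub_lt_mem_nhds L (hclose 0).ne_bot)).exists
  refine ⟨L, hL, ?_⟩
  rw [show L - a = (c s ^ p ^ s - a) - (c s ^ p ^ s - L) by ring]
  exact v.map_sub_lt (hclose s) hs

end IsCompleteDVF

namespace HypHom

variable {K₁ K₂ : Type*} [Field K₁] [Field K₂] [Valued K₁ QM0] [Valued K₂ QM0] {p e₁ e₂ : ℕ}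
  {γ δ : QM0} (f : HypHom (v : Valuation K₁ QM0) γ (v : Valuation K₂ QM0) δ)

lemma exists_teich_map_eq (h₁ : IsCompleteDVF K₁ p e₁) (h₂ : IsCompleteDVF K₂ p e₂)
    (hδ₀ : δ ≠ 0) (hδ : δ ≤ 1) {a : K₁} (ha : a ∈ Teich K₁ p) :
    ∃ b ∈ Teich K₂ p, f.toFun (hmk v γ a) = hmk v δ b := by
  rcases eq_or_ne a 0 with rfl | ha0
  · exact ⟨0, zero_mem_teich h₂.prime.ne_zero, f.map_zero'⟩
  obtain ⟨a', ha'⟩ := hmk_surjective (f.toFun (hmk v γ a))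
  have hva' : v a' = 1 := (f.map_eq_one_iff ha'.symm).mp (h₁.map_eq_one_of_teich ha ha0)
  have ha'0 : a' ≠ 0 := by rintro rfl; simp at hva'
  have hroots : ∀ s, ∃ c : K₂, v c ≤ 1 ∧ hrel v δ a' (c ^ p ^ s) := by
    intro s
    obtain ⟨b, hb, hba⟩ := ha.2 s
    obtain ⟨c, hc⟩ := hmk_surjective (f.toFun (hmk v γ b))
    refine ⟨c, (f.map_le_one_iff hc.symm).mp hb, (hmk_eq_hmk_iff hδ₀ hδ).mp ?_⟩
    rw [← f.map_pow hc.symm, hba, ha']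
  choose c hc hca' using hroots
  simp only [hrel_iff_map_sub_lt ha'0, hva', one_mul] at hca'
  obtain ⟨L, hL, hLa'⟩ := h₂.exists_teich_map_sub_lt hc hδ hca'
  refine ⟨L, hL, ha'.symm.trans ((hmk_eq_hmk_iff hδ₀ hδ).mpr ?_)⟩
  rwa [hrel_iff_map_sub_lt ha'0, hva', one_mul]

lemma eq_of_teich_of_map_eq (h₁ : IsCompleteDVF K₁ p e₁) (hγ₀ : γ ≠ 0) (hδ₀ : δ ≠ 0)
    (hδ : δ ≤ 1) {a a' : K₁} (ha : a ∈ Teich K₁ p) (ha' : a' ∈ Teich K₁ p)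
    (h : f.toFun (hmk v γ a) = f.toFun (hmk v γ a')) : a = a' := by
  rcases eq_or_ne a' 0 with rfl | ha'0
  · exact f.eq_zero_of_map_eq_zero (h.trans f.map_zero')
  rcases eq_or_ne a 0 with rfl | ha0
  · exact (f.eq_zero_of_map_eq_zero (h.symm.trans f.map_zero')).symm
  by_contra hne
  have hva := h₁.map_eq_one_of_teich ha ha0
  have hva' := h₁.map_eq_one_of_teich ha' ha'0
  have hsub : v (a - a') = v a := by
    rw [hva]
    exact (v.map_sub_le hva.le hva'.le).antisymm
      (not_lt.mp fun hlt => hne (h₁.eq_of_teich_of_map_sub_lt_one ha ha' hlt))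
  obtain ⟨b, hb⟩ := hmk_surjective (f.toFun (hmk v γ a))
  obtain ⟨d, hd⟩ := hmk_surjective (f.toFun (hmk v γ (a - a')))
  have hsum : hsumMem v γ a' (a - a') a :=
    ⟨a', a - a', hrel_refl hγ₀ _, hrel_refl hγ₀ _, by rw [add_sub_cancel]; exact hrel_refl hγ₀ _⟩
  have hb0 : b ≠ 0 := by rintro rfl; exact ha0 (f.eq_zero_of_map_eq_zero hb.symm)
  exact (map_lt_of_hsumMem_self hδ₀ hδ hb0 (f.map_hsum' _ _ _ _ _ _ (h.symm.trans hb.symm)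
    hd.symm hb.symm hsum)).ne ((f.map_eq_iff hd.symm hb.symm).mp hsub)

end HypHom

lemma hnγ_ne_zero (e n : ℕ) : hnγ e n ≠ 0 := WithZero.coe_ne_zero

lemma hnγ_le_one (e : ℕ) {n : ℕ} (hn : 1 ≤ n) : hnγ e n ≤ 1 := by
  rw [hnγ, one_eq_expQ_zero, expQ_le_expQ]
  exact div_nonneg (sub_nonneg.mpr (by exact_mod_cast hn)) (Nat.cast_nonneg e)

theorem statement5_general {K₁ K₂ : Type*} [Field K₁] [Field K₂] [Valued K₁ QM0] [Valued K₂ QM0]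
    (p e₁ e₂ n m : ℕ) (h₁ : IsCompleteDVF K₁ p e₁) (h₂ : IsCompleteDVF K₂ p e₂)
    (hm : 1 ≤ m)
    (f : HypHom (Valued.v : Valuation K₁ QM0) (hnγ e₁ n)
      (Valued.v : Valuation K₂ QM0) (hnγ e₂ m)) :
    (∀ a ∈ Teich K₁ p, ∃ b ∈ Teich K₂ p,
      f.toFun (hmk Valued.v (hnγ e₁ n) a) = hmk Valued.v (hnγ e₂ m) b) ∧
    (∀ a ∈ Teich K₁ p, ∀ a' ∈ Teich K₁ p,
      f.toFun (hmk Valued.v (hnγ e₁ n) a) = f.toFun (hmk Valued.v (hnγ e₁ n) a') →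
        hmk (Valued.v : Valuation K₁ QM0) (hnγ e₁ n) a = hmk Valued.v (hnγ e₁ n) a') := by
  have hδ₀ := hnγ_ne_zero e₂ m
  have hδ := hnγ_le_one e₂ hm
  exact ⟨fun a ha => f.exists_teich_map_eq h₁ h₂ hδ₀ hδ ha, fun a ha a' ha' h => by
    rw [f.eq_of_teich_of_map_eq h₁ (hnγ_ne_zero e₁ n) hδ₀ hδ ha ha' h]⟩

/-- Let `K₁`, `K₂` be complete discrete valued fields of mixed
characteristic `(0,p)` with perfect residue fields, with Teichmüller sets `S(K₁)`,
`S(K₂)`, and let `f : H_n(K₁) → H_m(K₂)` be a homomorphism of valued hyperfields.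
Then `f` maps `H_n(S(K₁))` into `H_m(S(K₂))`, injectively. -/
theorem statement5 {K₁ K₂ : Type*} [Field K₁] [Field K₂] [Valued K₁ QM0] [Valued K₂ QM0]
    (p e₁ e₂ n m : ℕ) (h₁ : IsCompleteDVF K₁ p e₁) (h₂ : IsCompleteDVF K₂ p e₂)
    (hn : 1 ≤ n) (hm : 1 ≤ m)
    (f : HypHom (Valued.v : Valuation K₁ QM0) (hnγ e₁ n)
      (Valued.v : Valuation K₂ QM0) (hnγ e₂ m)) :
    (∀ a ∈ Teich K₁ p, ∃ b ∈ Teich K₂ p,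
      f.toFun (hmk Valued.v (hnγ e₁ n) a) = hmk Valued.v (hnγ e₂ m) b) ∧
    (∀ a ∈ Teich K₁ p, ∀ a' ∈ Teich K₁ p,
      f.toFun (hmk Valued.v (hnγ e₁ n) a) = f.toFun (hmk Valued.v (hnγ e₁ n) a') →
        hmk (Valued.v : Valuation K₁ QM0) (hnγ e₁ n) a = hmk Valued.v (hnγ e₁ n) a') :=
  statement5_general p e₁ e₂ n m h₁ h₂ hm f
end
end

section
/- Let (K, ν, Γ) be a valued field, Γ° a nontrivial convex subgroup of Γ, and γ ∈ Γ° with γ > 0. Let ν̇ be the coarse valuation of ν with respect to Γ° and (K°, ν°, Γ°) the core field. Then the map sending the coset a(1+m^γ) (for a ∈ K with ν(a) ∈ Γ°) to the coset a°(1+(m°)^γ) in H_γ(K°), and sending 0_{Γ°} to [0], is a well-defined isomorphism of valued hyperfields from H_γ(K, Γ°) onto H_γ(K°). In particular, for a, b ∈ K with ν(a), ν(b) ∈ Γ°: a(1+m^γ) = b(1+m^γ) if and only if a°(1+(m°)^γ) = b°(1+(m°)^γ), the map is multiplicative, and it carries hypersums to hypersums. -/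
/-!
Reduction modulo the maximal ideal `𝔪_ν̇ = {x : ν(x) > Γ°}` of the coarse valuation ring
realises the isomorphism. The one real point is that a coset `a(1+𝔪^γ)` with `ν(a) ∈ Γ°`
absorbs every perturbation `d` of value `> Γ°`: since `γ ∈ Γ°`, also `ν(d/a) > γ`, so
`b = a u + d = a(u + d/a)` stays in the coset. Hence two representatives have the same residue
class in `H_γ(K°)` exactly when they define the same element of `H_γ(K, Γ°)`, and hypersums
correspond because the cosets of `a°` in `K°` are the residues of the cosets of `a`.
Convexity of `Γ°` gives surjectivity: every element of `R_ν̇` has value in `Γ°` or `> Γ°`.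
-/

open Multiplicative WithZero Filter

noncomputable section

section Statement16

variable {K : Type*} [Field K] {Γ₀ : Type*} [LinearOrderedCommGroupWithZero Γ₀]

/-- `ν(a) ∈ Γ°`, where the convex subgroup `Γ°` is given multiplicatively by `H ≤ Γ₀ˣ`. -/
def inCore (v : Valuation K Γ₀) (H : Subgroup Γ₀ˣ) (a : K) : Prop :=
  ∃ h ∈ H, v a = (h : Γ₀)

/-- `ν(a) > Γ°`, i.e. `ν(a) > δ` for all `δ ∈ Γ°` (multiplicatively `v a < h` for all
`h ∈ H`); this includes `a = 0`. -/
def small (v : Valuation K Γ₀) (H : Subgroup Γ₀ˣ) (a : K) : Prop :=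
  ∀ h ∈ H, v a < (h : Γ₀)

/-- The valuation ring `R_ν̇` of the coarse valuation `ν̇` with respect to `Γ°`:
`{x : ν̇(x) ≥ 0} = {x : ∃ δ ∈ Γ°, ν(x) ≥ δ}`. -/
def coarseRing (v : Valuation K Γ₀) (H : Subgroup Γ₀ˣ) : Subring K where
  carrier := {x | ∃ h ∈ H, v x ≤ (h : Γ₀)}
  one_mem' := ⟨1, H.one_mem, by simp⟩
  zero_mem' := ⟨1, H.one_mem, by simp⟩
  mul_mem' := by
    rintro a b ⟨h₁, hh₁, hv₁⟩ ⟨h₂, hh₂, hv₂⟩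
    exact ⟨h₁ * h₂, H.mul_mem hh₁ hh₂, by rw [Valuation.map_mul]; exact mul_le_mul' hv₁ hv₂⟩
  add_mem' := by
    rintro a b ⟨h₁, hh₁, hv₁⟩ ⟨h₂, hh₂, hv₂⟩
    rcases le_total (h₁ : Γ₀) h₂ with hle | hle
    · exact ⟨h₂, hh₂, le_trans (v.map_add a b) (max_le (le_trans hv₁ hle) hv₂)⟩
    · exact ⟨h₁, hh₁, le_trans (v.map_add a b) (max_le hv₁ (le_trans hv₂ hle))⟩
  neg_mem' := by
    rintro a ⟨h, hh, hv⟩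
    exact ⟨h, hh, by rwa [Valuation.map_neg]⟩

/-- The maximal ideal `𝔪_ν̇ = {x : ν(x) > Γ°}` of the coarse valuation ring; the core
field is `K° = R_ν̇/𝔪_ν̇`. -/
def coarseIdeal (v : Valuation K Γ₀) (H : Subgroup Γ₀ˣ) : Ideal (coarseRing v H) where
  carrier := {x | small v H (x : K)}
  zero_mem' := fun h hh => by
    simpa using zero_lt_iff.mpr (Units.ne_zero h)
  add_mem' := by
    intro a b ha hb h hh
    exact lt_of_le_of_lt (v.map_add _ _) (max_lt (ha h hh) (hb h hh))
  smul_mem' := by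
    intro c x hx h hh
    obtain ⟨hc, hhc, hvc⟩ := c.2
    show v ((c : K) * (x : K)) < (h : Γ₀)
    rw [Valuation.map_mul]
    calc v (c : K) * v (x : K) ≤ (hc : Γ₀) * v (x : K) := mul_le_mul_left hvc _
      _ < (hc : Γ₀) * ((hc⁻¹ * h : Γ₀ˣ) : Γ₀) := by
          apply mul_lt_mul_of_pos_left _ (zero_lt_iff.mpr (Units.ne_zero hc))
          exact hx (hc⁻¹ * h) (H.mul_mem (H.inv_mem hhc) hh)
      _ = (h : Γ₀) := by
          rw [Units.val_mul]
          rw [← mul_assoc]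
          norm_cast
          rw [mul_inv_cancel, one_mul]
  
/-- The core field `K°` of `(K, ν)` with respect to `Γ°` (as a quotient ring; it is a
field). -/
abbrev CoreField (v : Valuation K Γ₀) (H : Subgroup Γ₀ˣ) : Type _ :=
  coarseRing v H ⧸ coarseIdeal v H

/-- The coset relation on `K°` defining `H_γ(K°)`: `b ∈ a·(1+(𝔪°)^γ)`. -/
def crel (v : Valuation K Γ₀) (H : Subgroup Γ₀ˣ) (γ : Γ₀) (a b : CoreField v H) : Prop :=
  ∃ w : coarseRing v H, v (w : K) < γ ∧
    b = a * (1 + Ideal.Quotient.mk (coarseIdeal v H) w)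

/-- Membership in the hypersum on `H_γ(K°)`. -/
def csum (v : Valuation K Γ₀) (H : Subgroup Γ₀ˣ) (γ : Γ₀) (a b c : CoreField v H) : Prop :=
  ∃ x y : CoreField v H, crel v H γ a x ∧ crel v H γ b y ∧ crel v H γ (x + y) c

/-- The coset relation on `H_γ(K, Γ°)`: two elements are identified iff they lie in the
same coset of `1+𝔪^γ`, or both have value `> Γ°` (both are the zero `0_{Γ°}`). -/
def relG (v : Valuation K Γ₀) (H : Subgroup Γ₀ˣ) (γ : Γ₀) (a b : K) : Prop :=
  hrel v γ a b ∨ (small v H a ∧ small v H b)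

/-- Membership in the hypersum `α +^{Γ°} β` of `H_γ(K, Γ°)` at the level of
representatives. -/
def memG (v : Valuation K Γ₀) (H : Subgroup Γ₀ˣ) (γ : Γ₀) (a b c : K) : Prop :=
  ∃ x y : K, hrel v γ a x ∧ hrel v γ b y ∧
    (hrel v γ (x + y) c ∨ (small v H (x + y) ∧ small v H c))

/-- The underlying set of `H_γ(K, Γ°)`: elements with value in `Γ°`, together with the
elements representing `0_{Γ°}`. -/
def domG (v : Valuation K Γ₀) (H : Subgroup Γ₀ˣ) : Type _ :=
  {a : K // inCore v H a ∨ small v H a}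

theorem domG_mem_coarseRing (v : Valuation K Γ₀) (H : Subgroup Γ₀ˣ) (a : domG v H) :
    a.1 ∈ coarseRing v H := by
  rcases a.2 with ⟨h, hh, hv⟩ | hs
  · exact ⟨h, hh, le_of_eq hv⟩
  · exact ⟨1, H.one_mem, le_of_lt (by simpa using hs 1 H.one_mem)⟩

/-- The map `H_γ(K, Γ°) → H_γ(K°)` at the level of representatives: `a ↦ a°`. -/
def coreMap (v : Valuation K Γ₀) (H : Subgroup Γ₀ˣ) (a : domG v H) : CoreField v H :=
  Ideal.Quotient.mk (coarseIdeal v H) ⟨a.1, domG_mem_coarseRing v H a⟩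

section CoreHyperfield

variable {v : Valuation K Γ₀} {H : Subgroup Γ₀ˣ}

local notation "π" => Ideal.Quotient.mk (coarseIdeal v H)

theorem not_small_iff {a : K} : ¬ small v H a ↔ ∃ h ∈ H, (h : Γ₀) ≤ v a := by
  simp [small]

theorem val_ne_zero_of_not_small {a : K} (ha : ¬ small v H a) : v a ≠ 0 :=
  fun h0 => ha fun h _ => h0 ▸ h.zero_lt

theorem small.zero : small v H 0 := fun h _ => by simp

theorem small.of_le {a b : K} (ha : small v H a) (hab : v b ≤ v a) : small v H b :=
  fun h hh => hab.trans_lt (ha h hh)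

theorem small.add {a b : K} (ha : small v H a) (hb : small v H b) : small v H (a + b) :=
  fun h hh => v.map_add_lt (ha h hh) (hb h hh)

theorem small.sub {a b : K} (ha : small v H a) (hb : small v H b) : small v H (a - b) :=
  fun h hh => (v.map_sub a b).trans_lt (max_lt (ha h hh) (hb h hh))

theorem inCore_or_small_of_mem_coarseRing
    (hconv : ∀ g ∈ H, ∀ x : Γ₀ˣ, (g : Γ₀) ≤ (x : Γ₀) → (x : Γ₀) ≤ 1 → x ∈ H)
    {a : K} (ha : a ∈ coarseRing v H) : inCore v H a ∨ small v H a := by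
  refine or_iff_not_imp_right.mpr fun hs => ?_
  obtain ⟨h₀, hh₀, hle₀⟩ := not_small_iff.mp hs
  obtain ⟨h₁, hh₁, hle₁⟩ := ha
  set x := Units.mk0 (v a) (val_ne_zero_of_not_small hs)
  have hx : x * h₁⁻¹ ∈ H := by
    refine hconv (h₀ * h₁⁻¹) (H.mul_mem hh₀ (H.inv_mem hh₁)) _ ?_ ?_
    · rw [Units.val_mul, Units.val_mul]
      exact mul_le_mul_left hle₀ _
    · calc ((x * h₁⁻¹ : Γ₀ˣ) : Γ₀) = v a * (h₁ : Γ₀)⁻¹ := by simp [x]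
        _ ≤ h₁ * (h₁ : Γ₀)⁻¹ := mul_le_mul_left hle₁ _
        _ = 1 := by simp
  exact ⟨x, by simpa using H.mul_mem hx hh₁, rfl⟩

theorem hrel_self {γ : Γ₀} (hγ : 0 < γ) (a : K) : hrel v γ a a :=
  ⟨1, by simpa using hγ, (mul_one a).symm⟩

theorem val_eq_of_hrel {γ : Γ₀} (hγ1 : γ ≤ 1) {a x : K} (h : hrel v γ a x) : v x = v a := by
  obtain ⟨u, hu, rfl⟩ := h
  have hu1 : v u = 1 := by simpa using v.map_one_add_of_lt (hu.trans_le hγ1)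
  rw [v.map_mul, hu1, mul_one]

theorem hrel_of_small_sub {γ : Γ₀ˣ} (hγH : γ ∈ H) {a x b : K} (ha : ¬ small v H a)
    (hx : hrel v γ a x) (hbx : small v H (b - x)) : hrel v γ a b := by
  obtain ⟨h, hh, hha⟩ := not_small_iff.mp ha
  obtain ⟨u, hu, rfl⟩ := hx
  have hd : v ((b - a * u) / a) < γ := by
    rw [v.map_div, div_lt_iff₀ (zero_lt_iff.mpr (val_ne_zero_of_not_small ha))]
    calc v (b - a * u) < (γ * h : Γ₀ˣ) := hbx _ (H.mul_mem hγH hh)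
      _ ≤ γ * v a := by rw [Units.val_mul]; exact mul_le_mul_right hha _
  refine ⟨u + (b - a * u) / a, ?_, ?_⟩
  · rw [add_sub_right_comm]
    exact v.map_add_lt hu hd
  · field_simp [v.ne_zero_iff.mp (val_ne_zero_of_not_small ha)]
    ring

theorem relG_iff_exists_hrel_small_sub {γ : Γ₀ˣ} (hγH : γ ∈ H) (hγ1 : (γ : Γ₀) ≤ 1) {a b : K} :
    relG v H γ a b ↔ ∃ x, hrel v γ a x ∧ small v H (b - x) := by
  constructor
  · rintro (hab | ⟨ha, hb⟩)
    · exact ⟨b, hab, by simpa using small.zero⟩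
    · exact ⟨a, hrel_self γ.zero_lt a, hb.sub ha⟩
  · rintro ⟨x, hx, hbx⟩
    by_cases ha : small v H a
    · have hxs : small v H x := ha.of_le (val_eq_of_hrel hγ1 hx).le
      exact Or.inr ⟨ha, by simpa using hbx.add hxs⟩
    · exact Or.inl (hrel_of_small_sub hγH ha hx hbx)

theorem mem_coarseRing_of_hrel {γ : Γ₀} (hγ1 : γ ≤ 1) {a x : K} (ha : a ∈ coarseRing v H)
    (hx : hrel v γ a x) : x ∈ coarseRing v H := by
  obtain ⟨h, hh, hha⟩ := ha
  exact ⟨h, hh, (val_eq_of_hrel hγ1 hx).trans_le hha⟩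

theorem mk_eq_mk_iff_small_sub (x y : coarseRing v H) :
    π x = π y ↔ small v H ((x : K) - y) :=
  Ideal.Quotient.mk_eq_mk_iff_sub_mem x y

theorem val_eq_of_mk_eq {a w : coarseRing v H} (ha : ¬ small v H a) (h : π w = π a) :
    v (w : K) = v a := by
  obtain ⟨h₀, hh₀, hle⟩ := not_small_iff.mp ha
  have hlt : v ((w : K) - a) < v a := ((mk_eq_mk_iff_small_sub w a).mp h h₀ hh₀).trans_le hle
  simpa using v.map_add_eq_of_lt_right hlt

theorem crel_self {γ : Γ₀} (hγ : 0 < γ) (c : CoreField v H) : crel v H γ c c :=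
  ⟨0, by simpa using hγ, by simp⟩

theorem crel_mk_iff {γ : Γ₀ˣ} (hγH : γ ∈ H) (a : coarseRing v H) (c : CoreField v H) :
    crel v H γ (π a) c ↔ ∃ x : coarseRing v H, hrel v γ a x ∧ π x = c := by
  constructor
  · rintro ⟨w, hw, rfl⟩
    exact ⟨a * (1 + w), ⟨1 + w, by simpa using hw, rfl⟩, by simp⟩
  · rintro ⟨x, ⟨u, hu, hxu⟩, rfl⟩
    refine ⟨⟨u - 1, γ, hγH, hu.le⟩, hu, ?_⟩
    rw [← map_one π, ← map_add, ← map_mul]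
    congr 1
    ext
    simp [hxu]

theorem crel_mk_mk_iff_relG {γ : Γ₀ˣ} (hγH : γ ∈ H) (hγ1 : (γ : Γ₀) ≤ 1)
    (a b : coarseRing v H) : crel v H γ (π a) (π b) ↔ relG v H γ a b := by
  rw [crel_mk_iff hγH, relG_iff_exists_hrel_small_sub hγH hγ1]
  constructor
  · rintro ⟨x, hx, hxb⟩
    exact ⟨x, hx, (mk_eq_mk_iff_small_sub b x).mp hxb.symm⟩
  · rintro ⟨x, hx, hbx⟩
    exact ⟨⟨x, mem_coarseRing_of_hrel hγ1 a.2 hx⟩, hx, ((mk_eq_mk_iff_small_sub b _).mpr hbx).symm⟩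

theorem memG_iff_csum {γ : Γ₀ˣ} (hγH : γ ∈ H) (hγ1 : (γ : Γ₀) ≤ 1) (a b c : coarseRing v H) :
    memG v H γ a b c ↔ csum v H γ (π a) (π b) (π c) := by
  constructor
  · rintro ⟨x, y, hx, hy, hxyc⟩
    let X : coarseRing v H := ⟨x, mem_coarseRing_of_hrel hγ1 a.2 hx⟩
    let Y : coarseRing v H := ⟨y, mem_coarseRing_of_hrel hγ1 b.2 hy⟩
    refine ⟨π X, π Y, (crel_mk_iff hγH a _).mpr ⟨X, hx, rfl⟩,
      (crel_mk_iff hγH b _).mpr ⟨Y, hy, rfl⟩, ?_⟩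
    rw [← map_add, crel_mk_mk_iff_relG hγH hγ1]
    exact hxyc
  · rintro ⟨_, _, hx, hy, hxyc⟩
    obtain ⟨X, hX, rfl⟩ := (crel_mk_iff hγH a _).mp hx
    obtain ⟨Y, hY, rfl⟩ := (crel_mk_iff hγH b _).mp hy
    rw [← map_add, crel_mk_mk_iff_relG hγH hγ1] at hxyc
    exact ⟨X, Y, hX, hY, hxyc⟩

end CoreHyperfield

theorem statement16_general (v : Valuation K Γ₀) (H : Subgroup Γ₀ˣ)
    (hconv : ∀ g ∈ H, ∀ x : Γ₀ˣ, (g : Γ₀) ≤ (x : Γ₀) → (x : Γ₀) ≤ 1 → x ∈ H)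
    (γ : Γ₀ˣ) (hγH : γ ∈ H) (hγ1 : (γ : Γ₀) < 1) :
    -- the map identifies the coset relations (well-definedness and injectivity):
    (∀ a b : domG v H,
      (relG v H (γ : Γ₀) a.1 b.1 ↔ crel v H (γ : Γ₀) (coreMap v H a) (coreMap v H b))) ∧
    -- surjectivity:
    (∀ c : CoreField v H, ∃ a : domG v H, crel v H (γ : Γ₀) (coreMap v H a) c) ∧
    -- multiplicativity:
    (∀ a b : domG v H, ∀ hab : inCore v H (a.1 * b.1) ∨ small v H (a.1 * b.1),
      coreMap v H ⟨a.1 * b.1, hab⟩ = coreMap v H a * coreMap v H b) ∧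
    -- the valuation is preserved (ν° of the image class, computed on any representative
    -- not in the kernel, equals ν(a)):
    (∀ a : domG v H, ¬ small v H a.1 → ∀ w : coarseRing v H,
      Ideal.Quotient.mk (coarseIdeal v H) w = coreMap v H a → v (w : K) = v a.1) ∧
    -- hypersums are carried to hypersums:
    (∀ a b c : domG v H,
      (memG v H (γ : Γ₀) a.1 b.1 c.1 ↔
        csum v H (γ : Γ₀) (coreMap v H a) (coreMap v H b) (coreMap v H c))) := by
  refine ⟨fun a b => ?_, fun c => ?_, fun a b _ => ?_, fun a ha w hw => ?_, fun a b c => ?_⟩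
  · exact (crel_mk_mk_iff_relG hγH hγ1.le ⟨a.1, _⟩ ⟨b.1, _⟩).symm
  · obtain ⟨x, rfl⟩ := Ideal.Quotient.mk_surjective c
    exact ⟨⟨x, inCore_or_small_of_mem_coarseRing hconv x.2⟩, crel_self γ.zero_lt _⟩
  · exact map_mul (Ideal.Quotient.mk (coarseIdeal v H)) ⟨a.1, _⟩ ⟨b.1, _⟩
  · exact val_eq_of_mk_eq ha hw
  · exact memG_iff_csum hγH hγ1.le ⟨a.1, _⟩ ⟨b.1, _⟩ ⟨c.1, _⟩

/-- Let `(K, ν, Γ)` be a valued field, `Γ°` a nontrivial convex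
subgroup of `Γ` (given multiplicatively by `H ≤ Γ₀ˣ`), and `γ ∈ Γ°` with `γ > 0`
(multiplicatively `γ < 1`).  The map sending the coset `a(1+𝔪^γ)` (for `ν(a) ∈ Γ°`) to
the coset `a°(1+(𝔪°)^γ)` in `H_γ(K°)` and sending `0_{Γ°}` to `[0]` is a well-defined
isomorphism of valued hyperfields from `H_γ(K, Γ°)` onto `H_γ(K°)`: it identifies the
coset relations (hence is well defined and injective), it is surjective, multiplicative,
valuation-preserving, and it carries hypersums to hypersums. -/
theorem statement16 (v : Valuation K Γ₀) (H : Subgroup Γ₀ˣ) (hne : H ≠ ⊥)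
    (hconv : ∀ g ∈ H, ∀ x : Γ₀ˣ, (g : Γ₀) ≤ (x : Γ₀) → (x : Γ₀) ≤ 1 → x ∈ H)
    (γ : Γ₀ˣ) (hγH : γ ∈ H) (hγ1 : (γ : Γ₀) < 1) :
    -- the map identifies the coset relations (well-definedness and injectivity):
    (∀ a b : domG v H,
      (relG v H (γ : Γ₀) a.1 b.1 ↔ crel v H (γ : Γ₀) (coreMap v H a) (coreMap v H b))) ∧
    -- surjectivity:
    (∀ c : CoreField v H, ∃ a : domG v H, crel v H (γ : Γ₀) (coreMap v H a) c) ∧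
    -- multiplicativity:
    (∀ a b : domG v H, ∀ hab : inCore v H (a.1 * b.1) ∨ small v H (a.1 * b.1),
      coreMap v H ⟨a.1 * b.1, hab⟩ = coreMap v H a * coreMap v H b) ∧
    -- the valuation is preserved (ν° of the image class, computed on any representative
    -- not in the kernel, equals ν(a)):
    (∀ a : domG v H, ¬ small v H a.1 → ∀ w : coarseRing v H,
      Ideal.Quotient.mk (coarseIdeal v H) w = coreMap v H a → v (w : K) = v a.1) ∧
    -- hypersums are carried to hypersums:
    (∀ a b c : domG v H,
      (memG v H (γ : Γ₀) a.1 b.1 c.1 ↔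
        csum v H (γ : Γ₀) (coreMap v H a) (coreMap v H b) (coreMap v H c))) :=
  statement16_general v H hconv γ hγH hγ1

end Statement16
end
end
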